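/- arXiv:1810.01359 — 4 statements merged into one kernel-verified Lean document; each statement's English description precedes it below -/
import Mathlib

section
/- Let R = k[[x,y,z]] over a field k and I_n = (z^{n^4} - z^n x^n, y^n - z^n x, x^{n+1} - x z^{n^4-n} + y z^n) for a fixed n ≥ 1. Then x z^{3n} ∈ I_n. -/
/-!
Two ring identities, valid for any exponent `N ≥ n` in place of `n^4`:
`y z^{2n} = x (z^N - z^n x^n) + z^n (x^{n+1} - x z^{N-n} + y z^n)`, and then
`x z^{3n} = y^{n-1} (y z^{2n}) - z^{2n} (y^n - z^n x)`.
-/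

namespace RelationIdeal

variable {R : Type*} [CommRing R]

/-- The paper's `Iₙ` is `relationIdeal x y z n (n ^ 4)`. -/
def relationIdeal (x y z : R) (n N : ℕ) : Ideal R :=
  Ideal.span {z ^ N - z ^ n * x ^ n, y ^ n - z ^ n * x, x ^ (n + 1) - x * z ^ (N - n) + y * z ^ n}

variable {x y z : R} {n N : ℕ}

theorem y_mul_z_pow_mem (h : n ≤ N) : y * z ^ (2 * n) ∈ relationIdeal x y z n N := by
  obtain ⟨s, rfl⟩ := Nat.exists_eq_add_of_le h
  have identity : y * z ^ (2 * n) = x * (z ^ (n + s) - z ^ n * x ^ n)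
      + z ^ n * (x ^ (n + 1) - x * z ^ (n + s - n) + y * z ^ n) := by
    rw [Nat.add_sub_cancel_left]; ring
  rw [identity]
  exact add_mem (Ideal.mul_mem_left _ _ (Ideal.subset_span (by simp)))
    (Ideal.mul_mem_left _ _ (Ideal.subset_span (by simp)))

theorem x_mul_z_pow_mem (hn : 1 ≤ n) (h : n ≤ N) : x * z ^ (3 * n) ∈ relationIdeal x y z n N := by
  obtain ⟨m, rfl⟩ := Nat.exists_eq_add_of_le hn
  have identity : x * z ^ (3 * (1 + m)) =
      y ^ m * (y * z ^ (2 * (1 + m))) - z ^ (2 * (1 + m)) * (y ^ (1 + m) - z ^ (1 + m) * x) := by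
    ring
  rw [identity]
  exact sub_mem (Ideal.mul_mem_left _ _ (y_mul_z_pow_mem h))
    (Ideal.mul_mem_left _ _ (Ideal.subset_span (by simp)))

end RelationIdeal

open MvPowerSeries in
theorem stmt_2_general {k : Type*} [Field k] (n : ℕ) (hn : 1 ≤ n)
    (x y z : MvPowerSeries (Fin 3) k)
    (I : Ideal (MvPowerSeries (Fin 3) k))
    (hI : I = Ideal.span {z ^ (n ^ 4) - z ^ n * x ^ n, y ^ n - z ^ n * x,
      x ^ (n + 1) - x * z ^ (n ^ 4 - n) + y * z ^ n}) :
    x * z ^ (3 * n) ∈ I := by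
  subst hI
  exact RelationIdeal.x_mul_z_pow_mem hn (Nat.le_self_pow (by norm_num) n)

open MvPowerSeries in
/-- `x z^{3n} ∈ Iₙ`. -/
theorem stmt_2 {k : Type*} [Field k] (n : ℕ) (hn : 1 ≤ n)
    (x y z : MvPowerSeries (Fin 3) k)
    (hx : x = X 0) (hy : y = X 1) (hz : z = X 2)
    (I : Ideal (MvPowerSeries (Fin 3) k))
    (hI : I = Ideal.span {z ^ (n ^ 4) - z ^ n * x ^ n, y ^ n - z ^ n * x,
      x ^ (n + 1) - x * z ^ (n ^ 4 - n) + y * z ^ n}) :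
    x * z ^ (3 * n) ∈ I :=
  stmt_2_general n hn x y z I hI
end

section
/- Let R = k[[x,y,z]] over a field k and I_n = (z^{n^4} - z^n x^n, y^n - z^n x, x^{n+1} - x z^{n^4-n} + y z^n) for fixed n ≥ 1. Then x^{2n+1}, y^{2n+1}, and z^{n^4+2n} all belong to I_n. -/
/-!
Write `a = z^N - z^n x^n`, `b = y^n - z^n x`, `c = x^(n+1) - x z^(N-n) + y z^n` with `N = n^4`.
In any commutative ring one has `y z^(2n) = z^n c + x a` and then `x z^(3n) = y^(n-1) (y z^(2n)) - z^(2n) b`;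
explicit combinations of these two elements with `a`, `b`, `c` give `y^(2n+1)` and `z^(N+2n)`, and, as soon as
`4n ≤ N` (that is, `n ≥ 2`), also `x^(2n+1)`. For `n = 1` the generators are `z (1 - x)`, `y - z x` and
`x^2 - x + y z`, and since `1 - x` is a unit in the power series ring they already force `x, y, z ∈ I`.
-/

section Generators

variable {R : Type*} [CommRing R] {I : Ideal R} {x y z : R} {n N : ℕ}

theorem y_mul_z_pow_mem (hN : n ≤ N) (ha : z ^ N - z ^ n * x ^ n ∈ I)
    (hc : x ^ (n + 1) - x * z ^ (N - n) + y * z ^ n ∈ I) : y * z ^ (2 * n) ∈ I := by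
  obtain ⟨M, rfl⟩ := Nat.exists_eq_add_of_le hN
  rw [Nat.add_sub_cancel_left] at hc
  have e : y * z ^ (2 * n) = z ^ n * (x ^ (n + 1) - x * z ^ M + y * z ^ n)
      + x * (z ^ (n + M) - z ^ n * x ^ n) := by ring
  rw [e]
  exact I.add_mem (I.mul_mem_left _ hc) (I.mul_mem_left _ ha)

theorem x_mul_z_pow_mem (hn : 1 ≤ n) (hb : y ^ n - z ^ n * x ∈ I) (hyz : y * z ^ (2 * n) ∈ I) :
    x * z ^ (3 * n) ∈ I := by
  obtain ⟨m, rfl⟩ := Nat.exists_eq_add_of_le' hn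
  have e : x * z ^ (3 * (m + 1)) = y ^ m * (y * z ^ (2 * (m + 1)))
      - z ^ (2 * (m + 1)) * (y ^ (m + 1) - z ^ (m + 1) * x) := by ring
  rw [e]
  exact I.sub_mem (I.mul_mem_left _ hyz) (I.mul_mem_left _ hb)

theorem y_pow_mem (hb : y ^ n - z ^ n * x ∈ I) (hyz : y * z ^ (2 * n) ∈ I) :
    y ^ (2 * n + 1) ∈ I := by
  have e : y ^ (2 * n + 1) = (y * (y ^ n - z ^ n * x) + 2 * (y * z ^ n * x)) * (y ^ n - z ^ n * x)
      + x ^ 2 * (y * z ^ (2 * n)) := by ring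
  rw [e]
  exact I.add_mem (I.mul_mem_left _ hb) (I.mul_mem_left _ hyz)

theorem z_pow_mem (hn : 1 ≤ n) (ha : z ^ N - z ^ n * x ^ n ∈ I) (hxz : x * z ^ (3 * n) ∈ I) :
    z ^ (N + 2 * n) ∈ I := by
  obtain ⟨m, rfl⟩ := Nat.exists_eq_add_of_le' hn
  have e : z ^ (N + 2 * (m + 1)) = z ^ (2 * (m + 1)) * (z ^ N - z ^ (m + 1) * x ^ (m + 1))
      + x ^ m * (x * z ^ (3 * (m + 1))) := by ring
  rw [e]
  exact I.add_mem (I.mul_mem_left _ ha) (I.mul_mem_left _ hxz)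

theorem x_pow_mem (hN : 4 * n ≤ N) (ha : z ^ N - z ^ n * x ^ n ∈ I)
    (hc : x ^ (n + 1) - x * z ^ (N - n) + y * z ^ n ∈ I) (hyz : y * z ^ (2 * n) ∈ I)
    (hxz : x * z ^ (3 * n) ∈ I) : x ^ (2 * n + 1) ∈ I := by
  obtain ⟨M, rfl⟩ := Nat.exists_eq_add_of_le' hN
  rw [show M + 4 * n - n = M + 3 * n by omega] at hc
  have e : x ^ (2 * n + 1) = (x ^ n + z ^ (M + 3 * n)) * (x ^ (n + 1) - x * z ^ (M + 3 * n) + y * z ^ n)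
      + z ^ (2 * M + 3 * n) * (x * z ^ (3 * n)) - 2 * z ^ (M + 2 * n) * (y * z ^ (2 * n))
      + y * (z ^ (M + 4 * n) - z ^ n * x ^ n) := by ring
  rw [e]
  exact I.add_mem (I.sub_mem (I.add_mem (I.mul_mem_left _ hc) (I.mul_mem_left _ hxz))
    (I.mul_mem_left _ hyz)) (I.mul_mem_left _ ha)

theorem mem_of_isUnit_one_sub (hu : IsUnit (1 - x)) (ha : z - z * x ∈ I) (hb : y - z * x ∈ I)
    (hc : x ^ 2 - x + y * z ∈ I) : x ∈ I ∧ y ∈ I ∧ z ∈ I := by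
  have hz : z ∈ I := by
    rw [← Ideal.mul_unit_mem_iff_mem I hu]
    simpa only [mul_sub, mul_one] using ha
  have hy : y ∈ I := by
    simpa using I.add_mem hb (I.mul_mem_right x hz)
  have hx : x ∈ I := by
    rw [← Ideal.mul_unit_mem_iff_mem I hu]
    have e : x * (1 - x) = y * z - (x ^ 2 - x + y * z) := by ring
    rw [e]
    exact I.sub_mem (I.mul_mem_right z hy) hc
  exact ⟨hx, hy, hz⟩

end Generators

theorem four_mul_le_pow_four {n : ℕ} (hn : 2 ≤ n) : 4 * n ≤ n ^ 4 :=
  calc 4 * n ≤ 2 ^ 3 * n := by omega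
    _ ≤ n ^ 3 * n := Nat.mul_le_mul_right n (Nat.pow_le_pow_left hn 3)
    _ = n ^ 4 := by ring

open MvPowerSeries in
theorem stmt_3_general {k : Type*} [Field k] (n : ℕ) (hn : 1 ≤ n)
    (x y z : MvPowerSeries (Fin 3) k)
    (hx : x = X 0)
    (I : Ideal (MvPowerSeries (Fin 3) k))
    (hI : I = Ideal.span {z ^ (n ^ 4) - z ^ n * x ^ n, y ^ n - z ^ n * x,
      x ^ (n + 1) - x * z ^ (n ^ 4 - n) + y * z ^ n}) :
    x ^ (2 * n + 1) ∈ I ∧ y ^ (2 * n + 1) ∈ I ∧ z ^ (n ^ 4 + 2 * n) ∈ I := by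
  have ha : z ^ (n ^ 4) - z ^ n * x ^ n ∈ I := hI ▸ Ideal.subset_span (by simp)
  have hb : y ^ n - z ^ n * x ∈ I := hI ▸ Ideal.subset_span (by simp)
  have hc : x ^ (n + 1) - x * z ^ (n ^ 4 - n) + y * z ^ n ∈ I := hI ▸ Ideal.subset_span (by simp)
  rcases hn.eq_or_lt with rfl | hn2
  · have hu : IsUnit (1 - x) := by simp [hx, isUnit_iff_constantCoeff]
    norm_num at ha hb hc
    obtain ⟨hxI, hyI, hzI⟩ := mem_of_isUnit_one_sub hu ha hb hc
    exact ⟨I.pow_mem_of_mem hxI _ (by norm_num), I.pow_mem_of_mem hyI _ (by norm_num),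
      I.pow_mem_of_mem hzI _ (by norm_num)⟩
  · have hyz := y_mul_z_pow_mem (Nat.le_self_pow (by norm_num) n) ha hc
    have hxz := x_mul_z_pow_mem hn hb hyz
    exact ⟨x_pow_mem (four_mul_le_pow_four hn2) ha hc hyz hxz, y_pow_mem hb hyz,
      z_pow_mem hn ha hxz⟩

open MvPowerSeries in
/-- `x^{2n+1}, y^{2n+1}, z^{n⁴+2n} ∈ Iₙ`. -/
theorem stmt_3 {k : Type*} [Field k] (n : ℕ) (hn : 1 ≤ n)
    (x y z : MvPowerSeries (Fin 3) k)
    (hx : x = X 0) (hy : y = X 1) (hz : z = X 2)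
    (I : Ideal (MvPowerSeries (Fin 3) k))
    (hI : I = Ideal.span {z ^ (n ^ 4) - z ^ n * x ^ n, y ^ n - z ^ n * x,
      x ^ (n + 1) - x * z ^ (n ^ 4 - n) + y * z ^ n}) :
    x ^ (2 * n + 1) ∈ I ∧ y ^ (2 * n + 1) ∈ I ∧ z ^ (n ^ 4 + 2 * n) ∈ I :=
  stmt_3_general n hn x y z hx I hI
end

section
/- Let R = k[[x,y,z]] over a field k and I_n = (z^{n^4} - z^n x^n, y^n - z^n x, x^{n+1} - x z^{n^4-n} + y z^n). Then lim_{n→∞} ℓ(R/I_n) / ℓ(R/(I_n + (x,y))) = 1, where ℓ denotes length. -/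
/-- The length of a module, as the Krull dimension of its lattice of submodules. -/
noncomputable def mLength (R M : Type*) [CommRing R] [AddCommGroup M] [Module R M] :
    WithBot ℕ∞ :=
  Order.krullDim (Submodule R M)

/-- The length of a module, as a natural number (intended for finite-length modules). -/
noncomputable def mLengthNat (R M : Type*) [CommRing R] [AddCommGroup M] [Module R M] : ℕ :=
  ((mLength R M).unbotD 0).untopD 0

section generic
variable {k R M : Type*} [Field k] [CommRing R] [Algebra k R]
  [AddCommGroup M] [Module R M] [Module k M] [IsScalarTower k R M]

open Module

lemma mLength_le_finrank [FiniteDimensional k M] :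
    mLength R M ≤ ((finrank k M : ℕ∞) : WithBot ℕ∞) := by
  rw [mLength, Order.krullDim]
  apply iSup_le
  intro p
  have key : ∀ i : Fin (p.length + 1), (i : ℕ) ≤ finrank k ((p i).restrictScalars k) := by
    intro i
    induction i using Fin.induction with
    | zero => simp
    | succ i ih =>
      have hlt : (p i.castSucc).restrictScalars k < (p i.succ).restrictScalars k := by
        have := p.step i
        exact lt_of_le_of_ne (by exact_mod_cast le_of_lt this)
          (fun h => (ne_of_lt this) (Submodule.restrictScalars_injective k R M h))
      have h3 := Submodule.finrank_lt_finrank_of_lt hlt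
      have hcast : ((i.castSucc : Fin (p.length+1)) : ℕ) = (i : ℕ) := rfl
      rw [hcast] at ih
      simp only [Fin.val_succ]
      omega
  have h1 : p.length ≤ finrank k ((p (Fin.last _)).restrictScalars k) := by
    simpa using key (Fin.last _)
  have h2 : finrank k ((p (Fin.last _)).restrictScalars k) ≤ finrank k M :=
    Submodule.finrank_le _
  exact_mod_cast h1.trans h2

lemma mLengthNat_bounds [FiniteDimensional k M] {m : ℕ}
    (p : LTSeries (Submodule R M)) (hp : p.length = m) :
    m ≤ mLengthNat R M ∧ mLengthNat R M ≤ finrank k M := by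
  have hub := mLength_le_finrank (k := k) (R := R) (M := M)
  have hlb : ((m : ℕ∞) : WithBot ℕ∞) ≤ mLength R M := by
    rw [← hp]; exact Order.LTSeries.length_le_krullDim p
  rw [mLength] at hub hlb
  cases hB : Order.krullDim (Submodule R M) with
  | bot =>
    rw [hB] at hlb
    exact absurd hlb (WithBot.not_coe_le_bot _)
  | coe e =>
    rw [hB] at hub hlb
    rw [WithBot.coe_le_coe] at hub hlb
    induction e using WithTop.recTopCoe with
    | top => exact absurd (top_le_iff.mp hub) (by simp)
    | coe L =>
      have hub' : L ≤ finrank k M := WithTop.coe_le_coe.mp hub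
      have hlb' : m ≤ L := WithTop.coe_le_coe.mp hlb
      have : mLengthNat R M = L := by
        rw [mLengthNat, mLength, hB]
        rfl
      omega

end generic

section series
open MvPowerSeries
variable {k : Type*} [Field k] {σ : Type*}

lemma bad_support_mem_span (B : Finset (σ →₀ ℕ)) (g : MvPowerSeries σ k)
    (hg : ∀ d, coeff d g ≠ 0 → ∃ b ∈ B, b ≤ d) :
    g ∈ Ideal.span ((fun b => (monomial b 1 : MvPowerSeries σ k)) '' (B : Set (σ →₀ ℕ))) := by
  classical
  induction B using Finset.induction generalizing g with
  | empty =>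
    have hz : g = 0 := by
      ext d
      by_contra hd
      obtain ⟨b, hb, -⟩ := hg d (by simpa using hd)
      simp at hb
    rw [hz]
    exact zero_mem _
  | @insert b B' hb ih =>
    set g₁ : MvPowerSeries σ k := (fun d => if b ≤ d then coeff d g else 0) with hg₁def
    set h : MvPowerSeries σ k := (fun e => coeff (e + b) g) with hhdef
    have hcoeff₁ : ∀ d, coeff d g₁ = if b ≤ d then coeff d g else 0 := fun d => rfl
    have hcoeffh : ∀ d, coeff d h = coeff (d + b) g := fun d => rfl
    have hg₁ : (monomial b 1 : MvPowerSeries σ k) * h = g₁ := by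
      ext d
      rw [coeff_monomial_mul, hcoeff₁]
      split_ifs with hbd
      · rw [one_mul, hcoeffh, tsub_add_cancel_of_le hbd]
      · rfl
    have hrest : ∀ d, coeff d (g - g₁) ≠ 0 → ∃ c ∈ B', c ≤ d := by
      intro d hd
      rw [map_sub, hcoeff₁] at hd
      by_cases hbd : b ≤ d
      · simp [hbd] at hd
      · obtain ⟨c, hc, hcd⟩ := hg d (by simpa [hbd] using hd)
        rcases Finset.mem_insert.mp hc with rfl | hc'
        · exact absurd hcd hbd
        · exact ⟨c, hc', hcd⟩
    have hmem₂ := ih (g - g₁) hrest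
    have hsplit : g = (monomial b 1 : MvPowerSeries σ k) * h + (g - g₁) := by
      rw [hg₁]; ring
    rw [hsplit]
    refine add_mem ?_ (Ideal.span_mono (Set.image_mono (by simp)) hmem₂)
    exact Ideal.mul_mem_right _ _ (Ideal.subset_span ⟨b, by simp, rfl⟩)

lemma finite_support_mem_span (G : Finset (σ →₀ ℕ)) (f : MvPowerSeries σ k)
    (hf : ∀ d, coeff d f ≠ 0 → d ∈ G) :
    f ∈ Submodule.span k ((fun d => (monomial d 1 : MvPowerSeries σ k)) '' (G : Set (σ →₀ ℕ))) := by
  classical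
  have hrepr : f = ∑ d ∈ G, coeff d f • (monomial d 1 : MvPowerSeries σ k) := by
    ext e
    rw [map_sum]
    have : ∀ d ∈ G, coeff e (coeff d f • (monomial d 1 : MvPowerSeries σ k))
        = if e = d then coeff d f else 0 := by
      intro d _
      rw [LinearMap.map_smul, coeff_monomial]
      split_ifs <;> simp
    rw [Finset.sum_congr rfl this]
    simp only [eq_comm (a := e)]
    rw [Finset.sum_ite_eq' G e (fun d => coeff d f)]
    split_ifs with he
    · rfl
    · by_contra hne
      exact he (hf e hne)
  rw [hrepr]
  exact Submodule.sum_mem _ fun d hd =>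
    Submodule.smul_mem _ _ (Submodule.subset_span ⟨d, hd, rfl⟩)

end series

section quot
open MvPowerSeries
variable {k : Type*} [Field k] {σ : Type*}

lemma quotient_spanned (J : Ideal (MvPowerSeries σ k))
    (B : Finset (σ →₀ ℕ)) (hBJ : ∀ b ∈ B, (monomial b 1 : MvPowerSeries σ k) ∈ J)
    {ι : Type*} [Fintype ι] (v : ι → (σ →₀ ℕ))
    (hcover : ∀ d, (∀ b ∈ B, ¬ b ≤ d) → ∃ i, v i = d) :
    Submodule.span k (Set.range fun i =>
      Ideal.Quotient.mk J (monomial (v i) 1 : MvPowerSeries σ k)) = ⊤ := by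
  classical
  rw [eq_top_iff]
  rintro q -
  obtain ⟨f, rfl⟩ := Ideal.Quotient.mk_surjective q
  set fgood : MvPowerSeries σ k :=
    (fun d => if (∀ b ∈ B, ¬ b ≤ d) then coeff d f else 0) with hfgdef
  have hcg : ∀ d, coeff d fgood = if (∀ b ∈ B, ¬ b ≤ d) then coeff d f else 0 :=
    fun d => rfl
  have hbad : f - fgood ∈ J := by
    have : ∀ d, coeff d (f - fgood) ≠ 0 → ∃ b ∈ B, b ≤ d := by
      intro d hd
      rw [map_sub, hcg] at hd
      by_cases hgood : ∀ b ∈ B, ¬ b ≤ d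
      · rw [if_pos hgood, sub_self] at hd
        exact absurd rfl hd
      · push_neg at hgood
        obtain ⟨b, hb, hbd⟩ := hgood
        exact ⟨b, hb, hbd⟩
    refine Ideal.span_le.mpr ?_ (bad_support_mem_span B (f - fgood) this)
    rintro _ ⟨b, hb, rfl⟩
    exact hBJ b hb
  have hmk : Ideal.Quotient.mk J f = Ideal.Quotient.mk J fgood := by
    rw [Ideal.Quotient.mk_eq_mk_iff_sub_mem]
    exact hbad
  rw [hmk]
  set G : Finset (σ →₀ ℕ) := Finset.image v Finset.univ with hGdef
  have hfg : ∀ d, coeff d fgood ≠ 0 → d ∈ G := by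
    intro d hd
    rw [hcg] at hd
    by_cases hgood : ∀ b ∈ B, ¬ b ≤ d
    · obtain ⟨i, hi⟩ := hcover d hgood
      exact Finset.mem_image.mpr ⟨i, Finset.mem_univ i, hi⟩
    · simp [hgood] at hd
  have hspan := finite_support_mem_span (k := k) G fgood hfg
  have hlin := Submodule.mem_map_of_mem (f := (Ideal.Quotient.mkₐ k J).toLinearMap) hspan
  rw [Submodule.map_span] at hlin
  refine Submodule.span_mono ?_ hlin
  rintro _ ⟨_, ⟨d, hd, rfl⟩, rfl⟩
  obtain ⟨i, -, rfl⟩ := Finset.mem_image.mp hd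
  exact ⟨i, rfl⟩

lemma quotient_findim (J : Ideal (MvPowerSeries σ k))
    (B : Finset (σ →₀ ℕ)) (hBJ : ∀ b ∈ B, (monomial b 1 : MvPowerSeries σ k) ∈ J)
    {ι : Type*} [Fintype ι] (v : ι → (σ →₀ ℕ))
    (hcover : ∀ d, (∀ b ∈ B, ¬ b ≤ d) → ∃ i, v i = d) :
    FiniteDimensional k (MvPowerSeries σ k ⧸ J) ∧
      Module.finrank k (MvPowerSeries σ k ⧸ J) ≤ Fintype.card ι := by
  have hspan := quotient_spanned J B hBJ v hcover
  set v' := fun i => Ideal.Quotient.mk J (monomial (v i) 1 : MvPowerSeries σ k)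
  have hfin : FiniteDimensional k (MvPowerSeries σ k ⧸ J) :=
    ⟨⟨(Set.finite_range v').toFinset, by rw [Set.Finite.coe_toFinset]; exact hspan⟩⟩
  refine ⟨hfin, ?_⟩
  classical
  have h1 : Module.finrank k (Submodule.span k (Set.range v')) ≤
      (Set.range v').toFinset.card := finrank_span_le_card _
  rw [hspan] at h1
  rw [finrank_top] at h1
  refine h1.trans ?_
  rw [Set.toFinset_card]
  exact Fintype.card_range_le v'
end quot

section partC
open MvPowerSeries Finsupp
variable {k : Type*} [Field k]

local notation "R3" => MvPowerSeries (Fin 3) k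

lemma zpow_not_mem (i : ℕ) :
    (X 2 : R3) ^ i ∉ Ideal.span {(X 0 : R3), X 1, X 2 ^ (i + 1)} := by
  intro h
  rw [Ideal.mem_span_insert] at h
  obtain ⟨a, w, hw, heq⟩ := h
  rw [Ideal.mem_span_insert] at hw
  obtain ⟨b, u, hu, rfl⟩ := hw
  rw [Ideal.mem_span_singleton] at hu
  obtain ⟨c, rfl⟩ := hu
  have := congrArg (coeff (single (2 : Fin 3) i)) heq
  rw [X_pow_eq, coeff_monomial_same] at this
  rw [map_add, map_add] at this
  have h0 : coeff (single (2 : Fin 3) i) (a * X 0) = 0 := by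
    rw [show (X 0 : R3) = monomial (single 0 1) 1 from rfl, coeff_mul_monomial, if_neg]
    rw [single_le_iff]
    simp [Finsupp.single_apply]
  have h1 : coeff (single (2 : Fin 3) i) (b * X 1) = 0 := by
    rw [show (X 1 : R3) = monomial (single 1 1) 1 from rfl, coeff_mul_monomial, if_neg]
    rw [single_le_iff]
    simp [Finsupp.single_apply]
  have h2 : coeff (single (2 : Fin 3) i) ((X 2 : R3) ^ (i + 1) * c) = 0 := by
    rw [X_pow_eq, coeff_monomial_mul, if_neg]
    rw [single_le_iff]
    simp
  rw [h0, h1, h2] at this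
  simp at this

lemma spanXXZ_mono {a c : ℕ} (hac : a ≤ c) :
    Ideal.span {(X 0 : R3), X 1, X 2 ^ c} ≤ Ideal.span {(X 0 : R3), X 1, X 2 ^ a} := by
  rw [Ideal.span_le]
  rintro f (rfl | rfl | rfl)
  · exact Ideal.subset_span (by simp)
  · exact Ideal.subset_span (by simp)
  · obtain ⟨t, rfl⟩ := Nat.exists_eq_add_of_le hac
    rw [pow_add]
    exact Ideal.mul_mem_right _ _ (Ideal.subset_span (by simp))

lemma exists_chain (J : Ideal R3) (m : ℕ)
    (hJ : J ≤ Ideal.span {(X 0 : R3), X 1, X 2 ^ m}) :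
    ∃ p : LTSeries (Submodule R3 (R3 ⧸ J)), p.length = m := by
  refine ⟨⟨m, fun j => Submodule.map J.mkQ
    (Ideal.span {(X 0 : R3), X 1, X 2 ^ (m - (j : ℕ))} : Ideal R3), ?_⟩, rfl⟩
  intro j
  have hjm : (j : ℕ) < m := j.2
  set b := m - ((j : ℕ) + 1) with hbdef
  have hcast : m - ((j.castSucc : Fin (m+1)) : ℕ) = b + 1 := by
    simp only [Fin.coe_castSucc]
    omega
  have hsucc : m - ((j.succ : Fin (m+1)) : ℕ) = b := by
    simp only [Fin.val_succ, hbdef]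
  dsimp only
  rw [hcast, hsucc]
  constructor
  · exact Submodule.map_mono (spanXXZ_mono (Nat.le_succ b))
  · intro hle
    have hmem : J.mkQ ((X 2 : R3) ^ b) ∈ Submodule.map J.mkQ
        (Ideal.span {(X 0 : R3), X 1, X 2 ^ b} : Ideal R3) :=
      Submodule.mem_map_of_mem (Ideal.subset_span (by simp))
    obtain ⟨s, hs, heq⟩ := hle hmem
    have hsub : (X 2 : R3) ^ b - s ∈ J := by
      rw [← Submodule.Quotient.eq]
      exact heq.symm
    have : (X 2 : R3) ^ b ∈ Ideal.span {(X 0 : R3), X 1, X 2 ^ (b + 1)} := by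
      have h1 : (X 2 : R3) ^ b - s ∈ Ideal.span {(X 0 : R3), X 1, X 2 ^ (b + 1)} :=
        (hJ.trans (spanXXZ_mono (by omega))) hsub
      have := add_mem h1 hs
      simpa using this
    exact zpow_not_mem b this
end partC

section partD1
open MvPowerSeries Finsupp
variable {k : Type*} [Field k]

local notation "R3" => MvPowerSeries (Fin 3) k

lemma mem_span3 {u v w f r s t : R3} (h : f = r * u + s * v + t * w) :
    f ∈ Ideal.span {u, v, w} := by
  rw [h]
  refine add_mem (add_mem ?_ ?_) ?_
  · exact Ideal.mul_mem_left _ _ (Ideal.subset_span (by simp))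
  · exact Ideal.mul_mem_left _ _ (Ideal.subset_span (by simp))
  · exact Ideal.mul_mem_left _ _ (Ideal.subset_span (by simp))

variable (k) in
noncomputable def gA (m g : ℕ) : R3 := X 2 ^ (4*(m+1)+g) - X 2 ^ (m+1) * X 0 ^ (m+1)
variable (k) in
noncomputable def gB (m : ℕ) : R3 := X 1 ^ (m+1) - X 2 ^ (m+1) * X 0
variable (k) in
noncomputable def gC (m g : ℕ) : R3 :=
  X 0 ^ (m+1+1) - X 0 * X 2 ^ (3*(m+1)+g) + X 1 * X 2 ^ (m+1)

variable (k) in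
noncomputable def Jmg (m g : ℕ) : Ideal R3 := Ideal.span {gA k m g, gB k m, gC k m g}

variable {m g : ℕ}

lemma mem_yz2n : (X 1 * X 2 ^ (2*(m+1)) : R3) ∈ Jmg k m g :=
  mem_span3 (r := X 0) (s := 0) (t := X 2 ^ (m+1))
    (by unfold gA gB gC; ring)

lemma mem_xz3n : (X 0 * X 2 ^ (3*(m+1)) : R3) ∈ Jmg k m g :=
  mem_span3 (r := X 1 ^ m * X 0) (s := -(X 2 ^ (2*(m+1)))) (t := X 1 ^ m * X 2 ^ (m+1))
    (by unfold gA gB gC; ring)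

lemma mem_ztop : (X 2 ^ (6*(m+1)+g) : R3) ∈ Jmg k m g := by
  have h : (X 2 ^ (6*(m+1)+g) : R3)
      = X 2 ^ (2*(m+1)) * gA k m g + X 0 ^ m * (X 0 * X 2 ^ (3*(m+1))) := by
    unfold gA; ring
  rw [h]
  exact add_mem (Ideal.mul_mem_left _ _ (Ideal.subset_span (by simp [Jmg])))
    (Ideal.mul_mem_left _ _ mem_xz3n)

lemma mem_y3n : (X 1 ^ (3*(m+1)) : R3) ∈ Jmg k m g := by
  have h : (X 1 ^ (3*(m+1)) : R3)
      = (X 1 ^ (2*(m+1)) + X 1 ^ (m+1) * X 2 ^ (m+1) * X 0 + X 2 ^ (2*(m+1)) * X 0 ^ 2) * gB k m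
        + X 0 ^ 2 * (X 0 * X 2 ^ (3*(m+1))) := by
    unfold gB; ring
  rw [h]
  refine add_mem (Ideal.mul_mem_left _ _ ?_) (Ideal.mul_mem_left _ _ mem_xz3n)
  exact Ideal.subset_span (by simp [Jmg])

lemma mem_x2n2 : (X 0 ^ (2*(m+1)+2) : R3) ∈ Jmg k m g := by
  have h : (X 0 ^ (2*(m+1)+2) : R3)
      = (X 0 ^ (m+1+1) + X 0 * X 2 ^ (3*(m+1)+g) - X 1 * X 2 ^ (m+1)) * gC k m g
        + (X 0 * X 2 ^ (3*(m+1))) * (X 0 * X 2 ^ (3*(m+1)+2*g))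
        - (2 : R3) * ((X 1 * X 2 ^ (2*(m+1))) * (X 0 * X 2 ^ (2*(m+1)+g)))
        + X 1 * (X 1 * X 2 ^ (2*(m+1))) := by
    unfold gC; ring
  rw [h]
  refine add_mem (sub_mem (add_mem ?_ ?_) ?_) ?_
  · exact Ideal.mul_mem_left _ _ (Ideal.subset_span (by simp [Jmg]))
  · exact Ideal.mul_mem_right _ _ mem_xz3n
  · exact Ideal.mul_mem_left _ _ (Ideal.mul_mem_right _ _ mem_yz2n)
  · exact Ideal.mul_mem_left _ _ mem_yz2n

lemma Jmg_mem_subset_span :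
    Jmg k m g ≤ Ideal.span {(X 0 : R3), X 1, X 2 ^ (4*(m+1)+g)} := by
  rw [Jmg, Ideal.span_le]
  have hx : (X 0 : R3) ∈ Ideal.span {(X 0 : R3), X 1, X 2 ^ (4*(m+1)+g)} :=
    Ideal.subset_span (by simp)
  have hy : (X 1 : R3) ∈ Ideal.span {(X 0 : R3), X 1, X 2 ^ (4*(m+1)+g)} :=
    Ideal.subset_span (by simp)
  have hz : (X 2 ^ (4*(m+1)+g) : R3) ∈ Ideal.span {(X 0 : R3), X 1, X 2 ^ (4*(m+1)+g)} :=
    Ideal.subset_span (by simp)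
  rintro f (rfl | rfl | rfl)
  · refine sub_mem hz ?_
    have : (X 2 ^ (m+1) * X 0 ^ (m+1) : R3) = (X 2 ^ (m+1) * X 0 ^ m) * X 0 := by ring
    rw [this]
    exact Ideal.mul_mem_left _ _ hx
  · refine sub_mem ?_ (Ideal.mul_mem_left _ _ hx)
    have : (X 1 ^ (m+1) : R3) = X 1 ^ m * X 1 := by ring
    rw [this]
    exact Ideal.mul_mem_left _ _ hy
  · refine add_mem (sub_mem ?_ (Ideal.mul_mem_right _ _ hx)) (Ideal.mul_mem_right _ _ hy)
    have : (X 0 ^ (m+1+1) : R3) = X 0 ^ (m+1) * X 0 := by ring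
    rw [this]
    exact Ideal.mul_mem_left _ _ hx

lemma ztop_mem_sup :
    (X 2 ^ (4*(m+1)+g) : R3) ∈ Jmg k m g ⊔ Ideal.span {(X 0 : R3), X 1} := by
  have h : (X 2 ^ (4*(m+1)+g) : R3) = gA k m g + (X 2 ^ (m+1) * X 0 ^ m) * X 0 := by
    unfold gA; ring
  rw [h]
  refine add_mem (Ideal.mem_sup_left (Ideal.subset_span (by simp [Jmg]))) ?_
  exact Ideal.mul_mem_left _ _ (Ideal.mem_sup_right (Ideal.subset_span (by simp)))

end partD1

section partD2
open MvPowerSeries Finsupp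
variable {k : Type*} [Field k]

local notation "R3" => MvPowerSeries (Fin 3) k

noncomputable def E3 (a b c : ℕ) : Fin 3 →₀ ℕ := single 0 a + single 1 b + single 2 c

lemma E3_apply0 (a b c : ℕ) : E3 a b c 0 = a := by
  simp [E3, Finsupp.single_apply]
lemma E3_apply1 (a b c : ℕ) : E3 a b c 1 = b := by
  simp [E3, Finsupp.single_apply]
lemma E3_apply2 (a b c : ℕ) : E3 a b c 2 = c := by
  simp [E3, Finsupp.single_apply]

lemma le_E3 {a b c : ℕ} {d : Fin 3 →₀ ℕ} :
    E3 a b c ≤ d ↔ a ≤ d 0 ∧ b ≤ d 1 ∧ c ≤ d 2 := by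
  rw [Finsupp.le_def]
  constructor
  · intro h
    refine ⟨?_, ?_, ?_⟩
    · simpa [E3_apply0] using h 0
    · simpa [E3_apply1] using h 1
    · simpa [E3_apply2] using h 2
  · rintro ⟨h0, h1, h2⟩ i
    fin_cases i
    · simpa [E3_apply0] using h0
    · simpa [E3_apply1] using h1
    · simpa [E3_apply2] using h2

lemma E3_eq_self (d : Fin 3 →₀ ℕ) : E3 (d 0) (d 1) (d 2) = d := by
  ext i
  fin_cases i
  · simp [E3_apply0]
  · simp [E3_apply1]
  · simp [E3_apply2]

lemma monE (a b c : ℕ) :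
    (monomial (E3 a b c) 1 : R3) = X 0 ^ a * X 1 ^ b * X 2 ^ c := by
  rw [X_pow_eq, X_pow_eq, X_pow_eq, monomial_mul_monomial, monomial_mul_monomial,
    one_mul, one_mul]
  rfl

end partD2

section combinedlem
open MvPowerSeries Finsupp
variable {k : Type*} [Field k]

local notation "R3" => MvPowerSeries (Fin 3) k

lemma bounds_combined (J : Ideal R3) (P : ℕ)
    (hle : J ≤ Ideal.span {(X 0 : R3), X 1, X 2 ^ P})
    (B : Finset (Fin 3 →₀ ℕ)) (hBJ : ∀ b ∈ B, (monomial b 1 : R3) ∈ J)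
    {ι : Type} [Fintype ι] (v : ι → (Fin 3 →₀ ℕ))
    (hcover : ∀ d, (∀ b ∈ B, ¬ b ≤ d) → ∃ i, v i = d) :
    P ≤ mLengthNat R3 (R3 ⧸ J) ∧ mLengthNat R3 (R3 ⧸ J) ≤ Fintype.card ι := by
  obtain ⟨p, hp⟩ := exists_chain J P hle
  obtain ⟨hfd, hfr⟩ := quotient_findim J B hBJ v hcover
  have h := mLengthNat_bounds (k := k) (R := R3) (M := R3 ⧸ J) p hp
  exact ⟨h.1, h.2.trans hfr⟩

end combinedlem

open MvPowerSeries Filter in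
/-- `lim_{n→∞} ℓ(R/Iₙ) / ℓ(R/(Iₙ + (x,y))) = 1`. -/
theorem stmt_5 {k : Type*} [Field k]
    (x y z : MvPowerSeries (Fin 3) k)
    (hx : x = X 0) (hy : y = X 1) (hz : z = X 2)
    (I : ℕ → Ideal (MvPowerSeries (Fin 3) k))
    (hI : ∀ n, I n = Ideal.span {z ^ (n ^ 4) - z ^ n * x ^ n, y ^ n - z ^ n * x,
      x ^ (n + 1) - x * z ^ (n ^ 4 - n) + y * z ^ n}) :
    Tendsto (fun n : ℕ =>
        (mLengthNat (MvPowerSeries (Fin 3) k) (MvPowerSeries (Fin 3) k ⧸ I n) : ℝ) /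
        (mLengthNat (MvPowerSeries (Fin 3) k)
          (MvPowerSeries (Fin 3) k ⧸ (I n ⊔ Ideal.span {x, y})) : ℝ))
      atTop (nhds 1) := by
  subst hx hy hz
  set R3 := MvPowerSeries (Fin 3) k with hR3
  set Nf : ℕ → ℕ := fun n => mLengthNat R3 (R3 ⧸ I n) with hNf
  set Df : ℕ → ℕ := fun n =>
    mLengthNat R3 (R3 ⧸ (I n ⊔ Ideal.span {(X 0 : R3), X 1})) with hDf
  -- main per-n bounds
  have key : ∀ n : ℕ, 2 ≤ n →
      Df n = n ^ 4 ∧ n ^ 4 ≤ Nf n ∧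
        Nf n ≤ (2*n+2) * ((3*n) * (2*n)) + ((2*n+2) * (3*n) + (n^4 + 2*n)) := by
    intro n hn
    obtain ⟨m, hm⟩ : ∃ m, n = m + 1 := ⟨n - 1, by omega⟩
    have hn4 : 4 * n ≤ n ^ 4 := by
      have h4 : (4 : ℕ) ≤ n * n := by nlinarith
      calc 4 * n ≤ (n * n) * n := Nat.mul_le_mul_right n h4
        _ ≤ (n * n) * (n * n) := Nat.mul_le_mul_left _ (by nlinarith)
        _ = n ^ 4 := by ring
    have hnn : n ≤ n ^ 4 := by omega
    obtain ⟨g, hg⟩ : ∃ g, n ^ 4 - n = 3 * n + g := ⟨n ^ 4 - 4 * n, by omega⟩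
    have hIn : I n = Jmg k m g := by
      rw [hI n, show n ^ 4 - n = 3 * (m + 1) + g by omega,
        show n ^ 4 = 4 * (m + 1) + g by omega, hm]
      rfl
    have hP : n ^ 4 = 4 * (m + 1) + g := by omega
    -- denominator
    set JD : Ideal R3 := I n ⊔ Ideal.span {(X 0 : R3), X 1} with hJD
    have hxJD : (X 0 : R3) ∈ JD := Ideal.mem_sup_right (Ideal.subset_span (by simp))
    have hyJD : (X 1 : R3) ∈ JD := Ideal.mem_sup_right (Ideal.subset_span (by simp))
    have hzJD : (X 2 ^ (4*(m+1)+g) : R3) ∈ JD := by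
      rw [hJD, hIn]; exact ztop_mem_sup
    have hDle : JD ≤ Ideal.span {(X 0 : R3), X 1, X 2 ^ (4*(m+1)+g)} := by
      rw [hJD, hIn]
      refine sup_le Jmg_mem_subset_span (Ideal.span_le.mpr ?_)
      rintro f (rfl | rfl) <;> exact Ideal.subset_span (by simp)
    have hDbounds :
        4*(m+1)+g ≤ Df n ∧ Df n ≤ Fintype.card (Fin (4*(m+1)+g)) := by
      refine bounds_combined (k := k) JD (4*(m+1)+g) hDle
        {E3 1 0 0, E3 0 1 0, E3 0 0 (4*(m+1)+g)} ?_
        (fun l : Fin (4*(m+1)+g) => E3 0 0 l.val) ?_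
      · intro b hb
        simp only [Finset.mem_insert, Finset.mem_singleton] at hb
        rcases hb with rfl | rfl | rfl
        · rw [monE]; simpa using hxJD
        · rw [monE]; simpa using hyJD
        · rw [monE]; simpa using hzJD
      · intro d hgood
        have h1 := hgood (E3 1 0 0) (by simp)
        have h2 := hgood (E3 0 1 0) (by simp)
        have h3 := hgood (E3 0 0 (4*(m+1)+g)) (by simp)
        rw [le_E3] at h1 h2 h3
        simp only [Nat.zero_le, true_and, and_true] at h1 h2 h3
        have hd0 : d 0 = 0 := by omega
        have hd1 : d 1 = 0 := by omega
        have hd2 : d 2 < 4*(m+1)+g := by omega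
        refine ⟨⟨d 2, hd2⟩, ?_⟩
        show E3 0 0 (d 2) = d
        conv_rhs => rw [← E3_eq_self d]
        rw [hd0, hd1]
    -- numerator
    have hNle : I n ≤ Ideal.span {(X 0 : R3), X 1, X 2 ^ (4*(m+1)+g)} := by
      rw [hIn]; exact Jmg_mem_subset_span
    have hNbounds :
        4*(m+1)+g ≤ Nf n ∧ Nf n ≤ Fintype.card
          ((Fin (2*(m+1)+2) × Fin (3*(m+1)) × Fin (2*(m+1))) ⊕
            ((Fin (2*(m+1)+2) × Fin (3*(m+1))) ⊕ Fin (6*(m+1)+g))) := by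
      refine bounds_combined (k := k) (I n) (4*(m+1)+g) hNle
        {E3 0 1 (2*(m+1)), E3 1 0 (3*(m+1)), E3 0 0 (6*(m+1)+g),
          E3 (2*(m+1)+2) 0 0, E3 0 (3*(m+1)) 0} ?_
        (fun i => match i with
          | Sum.inl p => E3 p.1.val p.2.1.val p.2.2.val
          | Sum.inr (Sum.inl p) => E3 p.1.val 0 p.2.val
          | Sum.inr (Sum.inr l) => E3 0 0 l.val) ?_
      · intro b hb
        rw [hIn]
        simp only [Finset.mem_insert, Finset.mem_singleton] at hb
        rcases hb with rfl | rfl | rfl | rfl | rfl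
        · rw [monE]; simpa using (mem_yz2n (k := k) (m := m) (g := g))
        · rw [monE]; simpa using (mem_xz3n (k := k) (m := m) (g := g))
        · rw [monE]; simpa using (mem_ztop (k := k) (m := m) (g := g))
        · rw [monE]; simpa using (mem_x2n2 (k := k) (m := m) (g := g))
        · rw [monE]; simpa using (mem_y3n (k := k) (m := m) (g := g))
      · intro d hgood
        have h1 := hgood (E3 0 1 (2*(m+1))) (by simp)
        have h2 := hgood (E3 1 0 (3*(m+1))) (by simp)
        have h3 := hgood (E3 0 0 (6*(m+1)+g)) (by simp)
        have h4 := hgood (E3 (2*(m+1)+2) 0 0) (by simp)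
        have h5 := hgood (E3 0 (3*(m+1)) 0) (by simp)
        rw [le_E3] at h1 h2 h3 h4 h5
        simp only [Nat.zero_le, true_and, and_true, not_and, not_le] at h1 h2 h3 h4 h5
        by_cases hc1 : d 2 < 2*(m+1)
        · exact ⟨Sum.inl (⟨d 0, by omega⟩, ⟨d 1, by omega⟩, ⟨d 2, hc1⟩), E3_eq_self d⟩
        · by_cases hc2 : d 2 < 3*(m+1)
          · have hd1 : d 1 = 0 := by omega
            refine ⟨Sum.inr (Sum.inl (⟨d 0, by omega⟩, ⟨d 2, hc2⟩)), ?_⟩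
            show E3 (d 0) 0 (d 2) = d
            conv_rhs => rw [← E3_eq_self d]
            rw [hd1]
          · have hd0 : d 0 = 0 := by omega
            have hd1 : d 1 = 0 := by omega
            refine ⟨Sum.inr (Sum.inr ⟨d 2, by omega⟩), ?_⟩
            show E3 0 0 (d 2) = d
            conv_rhs => rw [← E3_eq_self d]
            rw [hd0, hd1]
    -- translate back to n
    simp only [Fintype.card_sum, Fintype.card_prod, Fintype.card_fin] at hDbounds hNbounds
    refine ⟨?_, ?_, ?_⟩
    · omega
    · omega
    · calc Nf n ≤ (2*(m+1)+2) * ((3*(m+1)) * (2*(m+1))) +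
            ((2*(m+1)+2) * (3*(m+1)) + (6*(m+1)+g)) := by omega
        _ = (2*n+2) * ((3*n) * (2*n)) + ((2*n+2) * (3*n) + (n^4 + 2*n)) := by
            rw [hm] at hP ⊢
            omega
  -- analysis
  have keyR : ∀ n : ℕ, 20 ≤ n →
      (1 : ℝ) ≤ (Nf n : ℝ) / (Df n : ℝ) ∧
        (Nf n : ℝ) / (Df n : ℝ) ≤ 1 + 13 / (n : ℝ) := by
    intro n hn
    obtain ⟨hD, hN1, hN2⟩ := key n (by omega)
    have hnR : (0 : ℝ) < (n : ℝ) := by positivity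
    have hDpos : (0 : ℝ) < (Df n : ℝ) := by
      rw [hD]
      positivity
    constructor
    · rw [le_div_iff₀ hDpos, one_mul]
      exact_mod_cast hD ▸ hN1
    · rw [div_le_iff₀ hDpos, hD]
      have hNn : Nf n ≤ n ^ 4 + 13 * n ^ 3 := by
        refine hN2.trans ?_
        nlinarith
      calc (Nf n : ℝ) ≤ ((n : ℝ) ^ 4 + 13 * (n : ℝ) ^ 3) := by exact_mod_cast hNn
        _ = (1 + 13 / (n : ℝ)) * ((n : ℝ) ^ 4) := by
            field_simp
        _ = (1 + 13 / (n : ℝ)) * (((n ^ 4 : ℕ) : ℝ)) := by push_cast; ring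
  have hupper : Tendsto (fun n : ℕ => 1 + 13 / (n : ℝ)) atTop (nhds 1) := by
    have h0 : Tendsto (fun n : ℕ => 13 / (n : ℝ)) atTop (nhds 0) :=
      tendsto_const_div_atTop_nhds_zero_nat 13
    have h1 : Tendsto (fun _ : ℕ => (1 : ℝ)) atTop (nhds 1) := tendsto_const_nhds
    simpa using h1.add h0
  refine tendsto_of_tendsto_of_tendsto_of_le_of_le' tendsto_const_nhds hupper ?_ ?_
  · filter_upwards [eventually_ge_atTop 20] with n hn
    exact (keyR n hn).1
  · filter_upwards [eventually_ge_atTop 20] with n hn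
    exact (keyR n hn).2
end

section
/- Let (S, n) ⊆ (R, m) be a module-finite extension of local rings with dim S = dim R = d, and let M be a finitely generated R-module with dim M = d. If M is i-effaceable as an R-module for all i < k, then M is i-effaceable as an S-module for all i < k. -/
/-- Koszul cochains: `C^i = ((i-subsets of Fin d) → M)`. -/
abbrev KoszulCochain (d : ℕ) (M : Type*) (i : ℕ) : Type _ :=
  {S : Finset (Fin d) // S.card = i} → M

/-- The Koszul differential into degree `i` (from degree `i-1`). -/
noncomputable def koszulDiff {R : Type*} [CommRing R] {d : ℕ} (f : Fin d → R)
    (M : Type*) [AddCommGroup M] [Module R M] (i : ℕ) :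
    KoszulCochain d M (i - 1) →ₗ[R] KoszulCochain d M i where
  toFun φ S := ∑ j ∈ S.1.attach,
    (((-1 : R) ^ ((S.1.filter (fun a => a < j.1)).card)) * f j.1) •
      φ ⟨S.1.erase j.1, by rw [Finset.card_erase_of_mem j.2, S.2]⟩
  map_add' φ ψ := by
    funext S
    simp [Finset.sum_add_distrib, smul_add]
  map_smul' r φ := by
    funext S
    simp only [Pi.smul_apply, RingHom.id_apply, smul_smul]
    rw [Finset.smul_sum]
    exact Finset.sum_congr rfl fun j _ => by rw [smul_smul, mul_comm]

/-- The `i`-th Koszul cohomology of `f : Fin d → R` on `M`: the kernel of the outgoing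
Koszul differential modulo (the pullback of) the range of the incoming one. -/
noncomputable abbrev koszulCohomology {R : Type*} [CommRing R] {d : ℕ} (f : Fin d → R)
    (M : Type*) [AddCommGroup M] [Module R M] (i : ℕ) : Type _ :=
  LinearMap.ker (koszulDiff f M (i + 1)) ⧸
    Submodule.comap (LinearMap.ker (koszulDiff f M (i + 1))).subtype
      (LinearMap.range (koszulDiff f M i))

/-!
For a local extension `S → R` with residue degree `f = [κ(R) : κ(S)]`, every `R`-module `N`
has `ℓ_S(N) = f · ℓ_R(N)`. Koszul cohomology of a sequence `x` of `S` on `M` is the same over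
`S` and over `R`, so `ℓ_S(H^i(x; M)) = f · ℓ_R(H^i(xR; M))`, while
`f · ℓ_R(R/xR) = ℓ_S(R/xR) ≤ ν · ℓ_S(S/xS)` when `R` is generated by `ν` elements over `S`.
Hence the ratio `ℓ_S(H^i(x; M)) / ℓ_S(S/xS)` is at most `ν` times the corresponding ratio over
`R`, and the image in `R` of a sequence of parameters of `M` over `S` lying in `𝔫^n` is one over
`R` lying in `𝔪^n`.
-/

section KoszulRestrictScalars

variable {S R : Type*} [CommRing S] [CommRing R] [Algebra S R]

section Homology

variable {C₀ C₁ C₂ : Type*}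
  [AddCommGroup C₀] [Module R C₀] [Module S C₀] [IsScalarTower S R C₀]
  [AddCommGroup C₁] [Module R C₁] [Module S C₁] [IsScalarTower S R C₁]
  [AddCommGroup C₂] [Module R C₂] [Module S C₂] [IsScalarTower S R C₂]

noncomputable def homologyRestrictScalarsEquiv (g₁ : C₀ →ₗ[R] C₁) (g₂ : C₁ →ₗ[R] C₂) :
    (LinearMap.ker (g₂.restrictScalars S) ⧸ (LinearMap.range (g₁.restrictScalars S)).comap
      (LinearMap.ker (g₂.restrictScalars S)).subtype) ≃ₗ[S]
      LinearMap.ker g₂ ⧸ (LinearMap.range g₁).comap (LinearMap.ker g₂).subtype :=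
  let e : LinearMap.ker (g₂.restrictScalars S) ≃ₗ[S] LinearMap.ker g₂ :=
    { toFun x := ⟨x.1, x.2⟩
      invFun x := ⟨x.1, x.2⟩
      map_add' _ _ := rfl
      map_smul' _ _ := rfl }
  (Submodule.Quotient.equiv _ _ e (by
    ext x
    exact ⟨fun ⟨y, hy, h⟩ => h ▸ hy, fun h => ⟨e.symm x, h, e.apply_symm_apply x⟩⟩)).trans
    (Submodule.Quotient.restrictScalarsEquiv S _)

end Homology

variable {M : Type*} [AddCommGroup M] [Module R M] [Module S M] [IsScalarTower S R M] {d : ℕ}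

theorem restrictScalars_koszulDiff_algebraMap_comp (x : Fin d → S) (i : ℕ) :
    (koszulDiff (algebraMap S R ∘ x) M i).restrictScalars S = koszulDiff x M i := by
  refine LinearMap.ext fun φ => funext fun X => Finset.sum_congr rfl fun j _ => ?_
  rw [← algebraMap_smul R (_ * x j.1), map_mul, map_pow, map_neg, map_one]
  rfl

theorem length_koszulCohomology_algebraMap_comp (x : Fin d → S) (i : ℕ) :
    Module.length S (koszulCohomology x M i) =
      Module.length S (koszulCohomology (algebraMap S R ∘ x) M i) := by
  unfold koszulCohomology
  rw [← restrictScalars_koszulDiff_algebraMap_comp (R := R) x (i + 1),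
    ← restrictScalars_koszulDiff_algebraMap_comp (R := R) x i]
  exact (homologyRestrictScalarsEquiv _ _).length_eq

end KoszulRestrictScalars

theorem mLengthNat_eq_toNat_length (R M : Type*) [CommRing R] [AddCommGroup M] [Module R M] :
    mLengthNat R M = (Module.length R M).toNat := by
  rw [mLengthNat, mLength, ← Module.coe_length, WithBot.unbotD_coe]
  rfl

theorem ENat.toNat_div_toNat_le {a b A B e : ℕ∞} {ν : ℕ} (ha : a = A * e)
    (hB : B * e ≤ ν * b) (he₀ : e ≠ 0) (he : e ≠ ⊤) (hb : b ≠ 0 → B ≠ 0) :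
    (a.toNat : ℝ) / b.toNat ≤ ν * ((A.toNat : ℝ) / B.toNat) := by
  have hrhs : 0 ≤ (ν : ℝ) * ((A.toNat : ℝ) / B.toNat) := by positivity
  rcases eq_or_ne b ⊤ with rfl | hbt
  · simpa using hrhs
  rcases eq_or_ne b 0 with rfl | hb₀
  · simpa using hrhs
  rcases eq_or_ne A ⊤ with rfl | hAt
  · simp [ha, ENat.top_mul he₀]
  lift b to ℕ using hbt
  lift A to ℕ using hAt
  lift e to ℕ using he
  have hBt : B ≠ ⊤ := by
    rintro rfl
    rw [ENat.top_mul he₀, top_le_iff, ← Nat.cast_mul] at hB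
    exact ENat.natCast_ne_top _ hB
  lift B to ℕ using hBt
  subst ha
  have hB' : (B * e : ℝ) ≤ ν * b := by exact_mod_cast hB
  have hbpos : (0 : ℝ) < b := by exact_mod_cast Nat.pos_of_ne_zero (by exact_mod_cast hb₀)
  have hBpos : (0 : ℝ) < B := by exact_mod_cast Nat.pos_of_ne_zero (by exact_mod_cast hb hb₀)
  simp only [← Nat.cast_mul, ENat.toNat_natCast]
  push_cast
  rw [← mul_div_assoc, div_le_div_iff₀ hbpos hBpos]
  nlinarith [mul_le_mul_of_nonneg_left hB' (Nat.cast_nonneg A : (0 : ℝ) ≤ A)]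

section Extension

variable {S R : Type*} [CommRing S] [CommRing R] [Algebra S R]

theorem Ideal.smul_quotient_map_eq_zero {J : Ideal S} {s : S} (hs : s ∈ J)
    (x : R ⧸ J.map (algebraMap S R)) : s • x = 0 := by
  obtain ⟨r, rfl⟩ := Submodule.Quotient.mk_surjective _ x
  rw [← Submodule.Quotient.mk_smul, Submodule.Quotient.mk_eq_zero, Algebra.smul_def]
  exact Ideal.mul_mem_right _ _ (Ideal.mem_map_of_mem _ hs)

theorem length_quotient_map_le {ν : ℕ} (f : (Fin ν → S) →ₗ[S] R) (hf : Function.Surjective f)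
    (J : Ideal S) :
    Module.length S (R ⧸ J.map (algebraMap S R)) ≤ ν * Module.length S (S ⧸ J) := by
  classical
  let P : Submodule S (Fin ν → S) := Submodule.pi Set.univ fun _ => J
  let g : (Fin ν → S) →ₗ[S] R ⧸ J.map (algebraMap S R) :=
    (Ideal.Quotient.mkₐ S (J.map (algebraMap S R))).toLinearMap ∘ₗ f
  have hP : P ≤ LinearMap.ker g := fun x hx => by
    rw [LinearMap.mem_ker, pi_eq_sum_univ x, map_sum]
    exact Finset.sum_eq_zero fun i _ => by
      rw [map_smul, Ideal.smul_quotient_map_eq_zero (hx i (Set.mem_univ i))]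
  have hg : Function.Surjective g := Ideal.Quotient.mk_surjective.comp hf
  have hPg : Function.Surjective
      (P.liftQ g hP ∘ₗ (Submodule.quotientPi fun _ => J).symm.toLinearMap) :=
    fun y => (hg y).elim fun x hx =>
      ⟨Submodule.quotientPi _ (Submodule.Quotient.mk x), by simpa using hx⟩
  simpa using Module.length_le_of_surjective _ hPg

theorem isFiniteLength_quotient_map_smul_top {M : Type*} [AddCommGroup M] [Module R M]
    [Module S M] [IsScalarTower S R M] {J : Ideal S}
    (h : IsFiniteLength S (M ⧸ (J • ⊤ : Submodule S M))) :
    IsFiniteLength R (M ⧸ (J.map (algebraMap S R) • ⊤ : Submodule R M)) := by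
  let P : Submodule R M := J.map (algebraMap S R) • ⊤
  have hJP : J • ⊤ ≤ LinearMap.ker (P.mkQ.restrictScalars S) := Submodule.smul_le.mpr
    fun s hs m _ => by
      rw [LinearMap.mem_ker, LinearMap.restrictScalars_apply, ← algebraMap_smul R,
        Submodule.mkQ_apply, Submodule.Quotient.mk_eq_zero]
      exact Submodule.smul_mem_smul (Ideal.mem_map_of_mem _ hs) Submodule.mem_top
  have hS : IsFiniteLength S (M ⧸ P) :=
    h.of_surjective (f := Submodule.liftQ (J • ⊤) _ hJP) fun y =>
      (Submodule.Quotient.mk_surjective _ y).elim fun m hm => ⟨Submodule.Quotient.mk m, hm⟩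
  rw [isFiniteLength_iff_isNoetherian_isArtinian] at hS ⊢
  exact hS.imp (isNoetherian_of_tower S) (isArtinian_of_tower S)

theorem Ideal.span_range_algebraMap_comp {ι : Type*} (x : ι → S) :
    Ideal.span (Set.range (algebraMap S R ∘ x)) =
      (Ideal.span (Set.range x)).map (algebraMap S R) := by
  rw [Set.range_comp, Ideal.map_span]

variable [IsLocalRing S] [IsLocalRing R] [IsLocalHom (algebraMap S R)]

theorem Ideal.map_ne_top_of_isLocalHom {J : Ideal S} (hJ : J ≠ ⊤) :
    J.map (algebraMap S R) ≠ ⊤ :=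
  ne_top_of_le_ne_top (IsLocalRing.map_maximalIdeal_lt_top (algebraMap S R)).ne
    (Ideal.map_mono (IsLocalRing.le_maximalIdeal hJ))

theorem IsLocalRing.algebraMap_mem_maximalIdeal_pow {s : S} {n : ℕ}
    (hs : s ∈ maximalIdeal S ^ n) : algebraMap S R s ∈ maximalIdeal R ^ n :=
  Ideal.pow_right_mono (map_maximalIdeal_le (algebraMap S R)) n
    (Ideal.map_pow (algebraMap S R) _ n ▸ Ideal.mem_map_of_mem _ hs)

theorem mLengthNat_koszulCohomology_div_le {ν : ℕ} (f : (Fin ν → S) →ₗ[S] R)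
    (hf : Function.Surjective f) {M : Type*} [AddCommGroup M] [Module R M] [Module S M]
    [IsScalarTower S R M] {d : ℕ} (x : Fin d → S) (i : ℕ) :
    (mLengthNat S (koszulCohomology x M i) : ℝ) / mLengthNat S (S ⧸ Ideal.span (Set.range x)) ≤
      ν * ((mLengthNat R (koszulCohomology (algebraMap S R ∘ x) M i) : ℝ) /
        mLengthNat R (R ⧸ Ideal.span (Set.range (algebraMap S R ∘ x)))) := by
  have := Module.Finite.of_surjective f hf
  rw [Ideal.span_range_algebraMap_comp]
  simp only [mLengthNat_eq_toNat_length]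
  refine ENat.toNat_div_toNat_le
    (e := Module.length (IsLocalRing.ResidueField S) (IsLocalRing.ResidueField R)) ?_ ?_
    Module.length_pos.ne' Module.length_ne_top fun hb => ?_
  · rw [length_koszulCohomology_algebraMap_comp (R := R), IsLocalRing.length_restrictScalars S R]
  · rw [← IsLocalRing.length_restrictScalars S R]
    exact length_quotient_map_le f hf _
  · rw [ne_eq, Module.length_eq_zero_iff, not_subsingleton_iff_nontrivial,
      Submodule.Quotient.nontrivial_iff] at hb ⊢
    exact Ideal.map_ne_top_of_isLocalHom hb

end Extension

open IsLocalRing Filter in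
theorem stmt_18_general {S R M : Type} [CommRing S] [IsLocalRing S]
    [CommRing R] [IsLocalRing R] [Algebra S R] [Module.Finite S R]
    (hinj : Function.Injective (algebraMap S R))
    [AddCommGroup M] [Module R M] [Module S M] [IsScalarTower S R M]
    (d k : ℕ)
    (hEffR : ∀ i < k, ∀ F : ℕ → Fin d → R,
      (∀ n, (∀ j, F n j ∈ (maximalIdeal R) ^ n) ∧
        IsFiniteLength R (M ⧸ (Ideal.span (Set.range (F n)) • ⊤ : Submodule R M))) →
      Tendsto (fun n : ℕ =>
          (mLengthNat R (koszulCohomology (F n) M i) : ℝ) /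
          (mLengthNat R (R ⧸ Ideal.span (Set.range (F n))) : ℝ))
        atTop (nhds 0)) :
    ∀ i < k, ∀ F : ℕ → Fin d → S,
      (∀ n, (∀ j, F n j ∈ (maximalIdeal S) ^ n) ∧
        IsFiniteLength S (M ⧸ (Ideal.span (Set.range (F n)) • ⊤ : Submodule S M))) →
      Tendsto (fun n : ℕ =>
          (mLengthNat S (koszulCohomology (F n) M i) : ℝ) /
          (mLengthNat S (S ⧸ Ideal.span (Set.range (F n))) : ℝ))
        atTop (nhds 0) := by
  intro i hi F hF
  have := (faithfulSMul_iff_algebraMap_injective S R).mpr hinj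
  obtain ⟨ν, f, hf⟩ := Module.Finite.exists_fin' S R
  have hG : ∀ n, (∀ j, (algebraMap S R ∘ F n) j ∈ maximalIdeal R ^ n) ∧
      IsFiniteLength R
        (M ⧸ (Ideal.span (Set.range (algebraMap S R ∘ F n)) • ⊤ : Submodule R M)) := fun n =>
    ⟨fun j => algebraMap_mem_maximalIdeal_pow ((hF n).1 j),
      Ideal.span_range_algebraMap_comp (R := R) (F n) ▸
        isFiniteLength_quotient_map_smul_top (hF n).2⟩
  refine squeeze_zero (fun n => by positivity)
    (fun n => mLengthNat_koszulCohomology_div_le f hf (F n) i) ?_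
  simpa using (hEffR i hi _ hG).const_mul (ν : ℝ)

open IsLocalRing Filter in
/-- for a module-finite extension `(S,n) ⊆ (R,m)` of local rings of the same
dimension `d` and a finitely generated `R`-module `M` of dimension `d`, if `M` is
`i`-effaceable as an `R`-module for all `i < k`, then it is `i`-effaceable as an
`S`-module for all `i < k`. -/
theorem stmt_18 {S R M : Type} [CommRing S] [IsLocalRing S] [IsNoetherianRing S]
    [CommRing R] [IsLocalRing R] [Algebra S R] [Module.Finite S R]
    (hinj : Function.Injective (algebraMap S R))
    [AddCommGroup M] [Module R M] [Module S M] [IsScalarTower S R M] [Module.Finite R M]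
    (d k : ℕ) (hdS : ringKrullDim S = d) (hdR : ringKrullDim R = d)
    (hdM : ringKrullDim (R ⧸ Module.annihilator R M) = d)
    (hEffR : ∀ i < k, ∀ F : ℕ → Fin d → R,
      (∀ n, (∀ j, F n j ∈ (maximalIdeal R) ^ n) ∧
        IsFiniteLength R (M ⧸ (Ideal.span (Set.range (F n)) • ⊤ : Submodule R M))) →
      Tendsto (fun n : ℕ =>
          (mLengthNat R (koszulCohomology (F n) M i) : ℝ) /
          (mLengthNat R (R ⧸ Ideal.span (Set.range (F n))) : ℝ))
        atTop (nhds 0)) :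
    ∀ i < k, ∀ F : ℕ → Fin d → S,
      (∀ n, (∀ j, F n j ∈ (maximalIdeal S) ^ n) ∧
        IsFiniteLength S (M ⧸ (Ideal.span (Set.range (F n)) • ⊤ : Submodule S M))) →
      Tendsto (fun n : ℕ =>
          (mLengthNat S (koszulCohomology (F n) M i) : ℝ) /
          (mLengthNat S (S ⧸ Ideal.span (Set.range (F n))) : ℝ))
        atTop (nhds 0) :=
  stmt_18_general hinj d k hEffR
end
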